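/- Fix integers 0 ≤ j < i ≤ n. The set {x ∈ ℝⁿ : ∇(h_i²)(x) = ∇(h_j²)(x)} equals the union {x : h_{i,j}(x) = 0} ∪ ⋃_{k=0}^{j−1} {x : h_{i,k}(x) = 0 and h_{j,k}(x) = 0}. Moreover at every point of this set one has h_i(x) = h_j(x), so the tangency locus of the graphs ⁿΓ_i = {x_0 = h_i(x)²} and ⁿΓ_j = {x_0 = h_j(x)²} in ℝ^{n+1} (the set of points of ⁿΓ_i ∩ ⁿΓ_j where the two graphs have the same tangent hyperplane) is exactly the part of the graph ⁿΓ_i (equivalently of ⁿΓ_j) lying over this union. -/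

import Mathlib

open scoped ContDiff

noncomputable section

/-- The polynomial `h_i` in the variables `x_1, …, x_i` (0-indexed: it depends on
coordinates `0, …, i-1`): `h_0 = 0`, `h_{i+1}(x) = x 0 - (h_i (x ∘ (·+1)))^2`. -/
def hpoly : ℕ → (ℕ → ℝ) → ℝ
  | 0, _ => 0
  | i + 1, x => x 0 - (hpoly i fun k => x (k + 1)) ^ 2

/-- Extension of a vector of `ℝⁿ` by zeros to an infinite sequence. -/
def extv {n : ℕ} (x : Fin n → ℝ) : ℕ → ℝ := fun k => if h : k < n then x ⟨k, h⟩ else 0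

/-- `h_{i,j}` as a function on `ℝⁿ` (0-indexed: it depends on coordinates `j, …, i-1`;
in the paper's notation `h_{i,j}(x) = h_{i-j}(x_{j+1}, …, x_i)`). -/
def hh (n i j : ℕ) (x : Fin n → ℝ) : ℝ := hpoly (i - j) fun k => extv x (j + k)

/-- The gradient of a function on `ℝⁿ`, via the Fréchet derivative. -/
def grad {n : ℕ} (f : (Fin n → ℝ) → ℝ) (x : Fin n → ℝ) : Fin n → ℝ :=
  fun k => fderiv ℝ f x (Pi.single k 1)

/-- The `m`-th standard basis vector of `ℝⁿ` (zero if `m ≥ n`). -/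
def evec (n m : ℕ) : Fin n → ℝ := fun k => if (k : ℕ) = m then 1 else 0

/-!
By the chain rule `∂_m (h_i²) = 2 (-2)^m h_{i,0} h_{i,1} ⋯ h_{i,m}`, so the two gradients agree
exactly when the sequences `(h_{i,l})_l` and `(h_{j,l})_l` have the same prefix products, i.e. when
they agree up to their first common zero. Since `h_{j,j} = 0`, such a zero exists at some `k ≤ j`
as soon as the gradients agree; conversely the recursion `h_{i,l} = x_l - h_{i,l+1}²` propagates
`h_{i,k} = h_{j,k}` down to all `l ≤ k`, which also gives `h_i = h_j` on this set.
-/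

open Finset

section

variable {M : Type*} [CommMonoidWithZero M] [IsCancelMulZero M] [Nontrivial M] {a b : ℕ → M}

theorem exists_common_zero_of_prod_range_eq_zero
    (hab : ∀ m, ∏ l ∈ range m, a l = ∏ l ∈ range m, b l) :
    ∀ m, ∏ l ∈ range m, a l = 0 → ∃ k < m, a k = 0 ∧ b k = 0
  | 0, h => by simp at h
  | m + 1, h => by
    rw [prod_range_succ, mul_eq_zero] at h
    by_cases hm : ∏ l ∈ range m, a l = 0
    · obtain ⟨k, hk, hak, hbk⟩ := exists_common_zero_of_prod_range_eq_zero hab m hm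
      exact ⟨k, hk.trans m.lt_succ_self, hak, hbk⟩
    · have hbm : (∏ l ∈ range m, b l) * b m = 0 := by
        rw [← prod_range_succ, ← hab, prod_range_succ, h.resolve_left hm, mul_zero]
      exact ⟨m, m.lt_succ_self, h.resolve_left hm, (mul_eq_zero.1 hbm).resolve_left (hab m ▸ hm)⟩

theorem prod_range_eq_prod_range_iff :
    (∀ m, ∏ l ∈ range m, a l = ∏ l ∈ range m, b l) ↔
      ∀ m, a m = b m ∨ ∃ k ≤ m, a k = 0 ∧ b k = 0 := by
  constructor
  · intro hab m
    by_cases hm : ∏ l ∈ range m, a l = 0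
    · obtain ⟨k, hk, hak, hbk⟩ := exists_common_zero_of_prod_range_eq_zero hab m hm
      exact Or.inr ⟨k, hk.le, hak, hbk⟩
    · have h := hab (m + 1)
      rw [prod_range_succ, prod_range_succ, hab m] at h
      exact Or.inl (mul_left_cancel₀ (by rwa [← hab m]) h)
  · intro h m
    induction m with
    | zero => simp
    | succ m ih =>
      rcases h m with hm | ⟨k, hkm, hak, hbk⟩
      · rw [prod_range_succ, prod_range_succ, ih, hm]
      · rw [prod_eq_zero (mem_range.2 (Nat.lt_succ_of_le hkm)) hak,
          prod_eq_zero (mem_range.2 (Nat.lt_succ_of_le hkm)) hbk]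

end

theorem hpoly_const_zero : ∀ d, hpoly d (fun _ => 0) = 0
  | 0 => rfl
  | d + 1 => by simp [hpoly, hpoly_const_zero d]

section

variable {n : ℕ} (i : ℕ) {l : ℕ} (x : Fin n → ℝ)

theorem hh_eq_zero_of_le (h : i ≤ l) : hh n i l x = 0 := by
  simp [hh, Nat.sub_eq_zero_of_le h, hpoly]

theorem hh_eq_zero_of_dim_le (h : n ≤ l) : hh n i l x = 0 := by
  have : (fun k => extv x (l + k)) = fun _ => 0 := funext fun _ => dif_neg (by omega)
  rw [hh, this, hpoly_const_zero]

theorem hh_eq_sub_sq (hl : l < i) : hh n i l x = extv x l - hh n i (l + 1) x ^ 2 := by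
  obtain ⟨d, rfl⟩ := Nat.exists_eq_add_of_lt hl
  rw [hh, hh, show l + d + 1 - l = d + 1 by omega, show l + d + 1 - (l + 1) = d by omega, hpoly]
  simp only [add_zero, add_assoc, add_comm 1]

theorem hh_eq_hh_of_le {j k : ℕ} (hji : j ≤ i) (hkj : k ≤ j) (hlk : l ≤ k)
    (h : hh n i k x = hh n j k x) : hh n i l x = hh n j l x := by
  induction k, hlk using Nat.le_induction with
  | base => exact h
  | succ k _ ih =>
    refine ih (by omega) ?_
    rw [hh_eq_sub_sq i x (by omega), hh_eq_sub_sq j x (by omega), h]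

end

theorem differentiable_extv {n : ℕ} (l : ℕ) : Differentiable ℝ fun x : Fin n → ℝ => extv x l := by
  by_cases h : l < n
  · simp only [extv, h, dite_true]
    fun_prop
  · simp only [extv, h, dite_false]
    fun_prop

theorem fderiv_extv_single {n : ℕ} (l : ℕ) (x : Fin n → ℝ) (m : Fin n) :
    fderiv ℝ (fun y : Fin n → ℝ => extv y l) x (Pi.single m 1) = if (m : ℕ) = l then 1 else 0 := by
  by_cases h : l < n
  · simp only [extv, h, dite_true, (hasFDerivAt_apply (𝕜 := ℝ) (⟨l, h⟩ : Fin n) x).fderiv]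
    simp [Pi.single_apply, Fin.ext_iff, eq_comm]
  · rw [if_neg (by omega)]
    simp [extv, h]

theorem differentiable_hpoly {E : Type*} [NormedAddCommGroup E] [NormedSpace ℝ E] :
    ∀ (d : ℕ) {f : ℕ → E → ℝ}, (∀ k, Differentiable ℝ (f k)) →
      Differentiable ℝ fun y => hpoly d fun k => f k y
  | 0, _, _ => differentiable_const 0
  | d + 1, _, hf => (hf 0).sub ((differentiable_hpoly d fun k => hf (k + 1)).pow 2)

theorem differentiable_hh (n i l : ℕ) : Differentiable ℝ (hh n i l) :=
  differentiable_hpoly _ fun k => differentiable_extv (l + k)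

theorem fderiv_hh_single (n i l : ℕ) (x : Fin n → ℝ) (m : Fin n) :
    fderiv ℝ (hh n i l) x (Pi.single m 1) =
      if l ≤ m ∧ (m : ℕ) < i then ∏ t ∈ Ico (l + 1) (m + 1), (-2 * hh n i t x) else 0 := by
  by_cases hl : l < i
  · have hfun : hh n i l = fun y => extv y l - hh n i (l + 1) y ^ 2 :=
      funext fun y => hh_eq_sub_sq i y hl
    have hd := differentiable_hh n i (l + 1) x
    rw [hfun, fderiv_fun_sub (differentiable_extv l x) (hd.fun_pow 2), fderiv_fun_pow 2 hd,
      sub_apply, smul_apply, fderiv_extv_single, fderiv_hh_single n i (l + 1) x m]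
    rcases lt_trichotomy (m : ℕ) l with h | h | h
    · simp [h.ne, h.not_ge, show ¬ l + 1 ≤ m by omega]
    · simp [h, hl]
    · rw [prod_eq_prod_Ico_succ_bot (show l + 1 < (m : ℕ) + 1 by omega)]
      simp only [h.ne', h.le, show l + 1 ≤ m by omega, true_and, if_false]
      split_ifs <;> ring
  · have hzero : hh n i l = fun _ => 0 := funext fun y => hh_eq_zero_of_le i y (not_lt.1 hl)
    rw [hzero, fderiv_const_apply, if_neg (by omega)]
    rfl
termination_by i - l

theorem grad_sq_hh (n i : ℕ) (x : Fin n → ℝ) (m : Fin n) :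
    grad (fun y => hh n i 0 y ^ 2) x m = 2 * (-2) ^ (m : ℕ) * ∏ l ∈ range (m + 1), hh n i l x := by
  rw [grad, fderiv_fun_pow 2 (differentiable_hh n i 0 x), smul_apply, fderiv_hh_single]
  by_cases hm : (m : ℕ) < i
  · rw [if_pos ⟨Nat.zero_le _, hm⟩, prod_mul_distrib, prod_const, Nat.card_Ico, range_eq_Ico,
      prod_eq_prod_Ico_succ_bot (Nat.succ_pos m)]
    simp only [nsmul_eq_mul, Nat.cast_ofNat, Nat.add_sub_cancel, smul_eq_mul]
    ring
  · rw [if_neg (by omega),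
      prod_eq_zero (mem_range.2 (by omega : i < m + 1)) (hh_eq_zero_of_le i x le_rfl)]
    simp

theorem grad_sq_hh_eq_iff (n i j : ℕ) (x : Fin n → ℝ) :
    grad (fun y => hh n i 0 y ^ 2) x = grad (fun y => hh n j 0 y ^ 2) x ↔
      ∀ m, ∏ l ∈ range m, hh n i l x = ∏ l ∈ range m, hh n j l x := by
  have hcoef : ∀ m : ℕ, (2 : ℝ) * (-2) ^ m ≠ 0 := fun m => by positivity
  simp only [funext_iff, grad_sq_hh, mul_right_inj' (hcoef _)]
  refine ⟨fun h m => ?_, fun h m => h _⟩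
  rcases m with _ | m
  · rfl
  by_cases hm : m < n
  · exact h ⟨m, hm⟩
  · have hn : n ∈ range (m + 1) := mem_range.2 (by omega)
    rw [prod_eq_zero hn (hh_eq_zero_of_dim_le i x le_rfl),
      prod_eq_zero hn (hh_eq_zero_of_dim_le j x le_rfl)]

theorem grad_sq_hh_eq_iff_exists_common_zero {n i j : ℕ} (hji : j ≤ i) (x : Fin n → ℝ) :
    grad (fun y => hh n i 0 y ^ 2) x = grad (fun y => hh n j 0 y ^ 2) x ↔
      ∃ k ≤ j, hh n i k x = 0 ∧ hh n j k x = 0 := by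
  rw [grad_sq_hh_eq_iff, prod_range_eq_prod_range_iff]
  constructor
  · intro h
    rcases h j with hj | hk
    · exact ⟨j, le_rfl, hj.trans (hh_eq_zero_of_le j x le_rfl), hh_eq_zero_of_le j x le_rfl⟩
    · exact hk
  · rintro ⟨k, hkj, hik, hjk⟩ m
    by_cases hmk : m ≤ k
    · exact Or.inl (hh_eq_hh_of_le i x hji hkj hmk (hik.trans hjk.symm))
    · exact Or.inr ⟨k, by omega, hik, hjk⟩

theorem mem_zero_hh_union_iff {n i j : ℕ} (x : Fin n → ℝ) :
    x ∈ {x : Fin n → ℝ | hh n i j x = 0} ∪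
        ⋃ k ∈ range j, {x : Fin n → ℝ | hh n i k x = 0 ∧ hh n j k x = 0} ↔
      ∃ k ≤ j, hh n i k x = 0 ∧ hh n j k x = 0 := by
  simp only [Set.mem_union, Set.mem_ofPred_eq, Set.mem_iUnion, mem_range, exists_prop]
  constructor
  · rintro (hij | ⟨k, hkj, hik, hjk⟩)
    · exact ⟨j, le_rfl, hij, hh_eq_zero_of_le j x le_rfl⟩
    · exact ⟨k, hkj.le, hik, hjk⟩
  · rintro ⟨k, hkj, hik, hjk⟩
    rcases hkj.lt_or_eq with hkj | rfl
    · exact Or.inr ⟨k, hkj, hik, hjk⟩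
    · exact Or.inl hik

theorem stmt_7_general (n i j : ℕ) (hji : j < i) :
    ({x : Fin n → ℝ |
        grad (fun y => (hh n i 0 y) ^ 2) x = grad (fun y => (hh n j 0 y) ^ 2) x}
      = {x : Fin n → ℝ | hh n i j x = 0} ∪
          ⋃ k ∈ Finset.range j, {x : Fin n → ℝ | hh n i k x = 0 ∧ hh n j k x = 0}) ∧
    (∀ x : Fin n → ℝ,
      x ∈ ({x : Fin n → ℝ | hh n i j x = 0} ∪
          ⋃ k ∈ Finset.range j, {x : Fin n → ℝ | hh n i k x = 0 ∧ hh n j k x = 0}) →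
      hh n i 0 x = hh n j 0 x) ∧
    ({z : ℝ × (Fin n → ℝ) |
        z.1 = (hh n i 0 z.2) ^ 2 ∧ z.1 = (hh n j 0 z.2) ^ 2 ∧
        grad (fun y => (hh n i 0 y) ^ 2) z.2 = grad (fun y => (hh n j 0 y) ^ 2) z.2}
      = {z : ℝ × (Fin n → ℝ) |
          z.1 = (hh n i 0 z.2) ^ 2 ∧
          z.2 ∈ ({x : Fin n → ℝ | hh n i j x = 0} ∪
            ⋃ k ∈ Finset.range j, {x : Fin n → ℝ | hh n i k x = 0 ∧ hh n j k x = 0})}) := by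
  have hzero_eq : ∀ x : Fin n → ℝ, (∃ k ≤ j, hh n i k x = 0 ∧ hh n j k x = 0) →
      hh n i 0 x = hh n j 0 x := fun x ⟨k, hkj, hik, hjk⟩ =>
    hh_eq_hh_of_le i x hji.le hkj k.zero_le (hik.trans hjk.symm)
  simp only [Set.ext_iff, Set.mem_ofPred_eq, mem_zero_hh_union_iff,
    grad_sq_hh_eq_iff_exists_common_zero hji.le]
  exact ⟨fun _ => trivial, hzero_eq, fun z =>
    ⟨fun ⟨h1, _, h3⟩ => ⟨h1, h3⟩, fun ⟨h1, h3⟩ => ⟨h1, by rw [h1, hzero_eq _ h3], h3⟩⟩⟩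

/-- Fix `0 ≤ j < i ≤ n`.  The set `{x : ∇(h_i²)(x) = ∇(h_j²)(x)}` equals
`{h_{i,j} = 0} ∪ ⋃_{k<j} {h_{i,k} = h_{j,k} = 0}`; at every point of this set `h_i(x) = h_j(x)`;
and the tangency locus of the graphs `ⁿΓ_i = {x_0 = h_i²}` and `ⁿΓ_j = {x_0 = h_j²}` (common
points with equal gradients) is exactly the part of `ⁿΓ_i` lying over this union. -/
theorem stmt_7 (n i j : ℕ) (hji : j < i) (hin : i ≤ n) :
    ({x : Fin n → ℝ |
        grad (fun y => (hh n i 0 y) ^ 2) x = grad (fun y => (hh n j 0 y) ^ 2) x}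
      = {x : Fin n → ℝ | hh n i j x = 0} ∪
          ⋃ k ∈ Finset.range j, {x : Fin n → ℝ | hh n i k x = 0 ∧ hh n j k x = 0}) ∧
    (∀ x : Fin n → ℝ,
      x ∈ ({x : Fin n → ℝ | hh n i j x = 0} ∪
          ⋃ k ∈ Finset.range j, {x : Fin n → ℝ | hh n i k x = 0 ∧ hh n j k x = 0}) →
      hh n i 0 x = hh n j 0 x) ∧
    ({z : ℝ × (Fin n → ℝ) |
        z.1 = (hh n i 0 z.2) ^ 2 ∧ z.1 = (hh n j 0 z.2) ^ 2 ∧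
        grad (fun y => (hh n i 0 y) ^ 2) z.2 = grad (fun y => (hh n j 0 y) ^ 2) z.2}
      = {z : ℝ × (Fin n → ℝ) |
          z.1 = (hh n i 0 z.2) ^ 2 ∧
          z.2 ∈ ({x : Fin n → ℝ | hh n i j x = 0} ∪
            ⋃ k ∈ Finset.range j, {x : Fin n → ℝ | hh n i k x = 0 ∧ hh n j k x = 0})}) :=
  stmt_7_general n i j hji
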